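/- The range of the tree-code map τ is exactly the set of almost even strings: a binary string x is almost even if and only if x = t^τ for some (unique) variable-free tree term t. -/

import Mathlib

inductive Letter : Type
  | a | b
deriving DecidableEq

open Letter

def alpha (x : List Letter) : ℕ := x.count Letter.a
def beta (x : List Letter) : ℕ := x.count Letter.b

/-- x is "almost even": nonempty, α(x) = β(x)+1, and every proper prefix u has α(u) ≤ β(u). -/
def AE (x : List Letter) : Prop :=
  x ≠ [] ∧ alpha x = beta x + 1 ∧ ∀ u : List Letter, u <+: x → u ≠ x → alpha u ≤ beta u

inductive Tr : Type
  | zero | pair (u v : Tr)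
deriving DecidableEq

def code : Tr → List Letter
  | Tr.zero => [Letter.a]
  | Tr.pair u v => Letter.b :: (code u ++ code v)

inductive Subt : Tr → Tr → Prop
  | refl (t : Tr) : Subt t t
  | left {s u v : Tr} : Subt s u → Subt s (Tr.pair u v)
  | right {s u v : Tr} : Subt s v → Subt s (Tr.pair u v)

/-!
A tree code `b · uᵗ · vᵗ` is almost even because every proper prefix of it stops inside `uᵗ`
(where the excess α - β is at most 1 after the leading `b`) or inside `vᵗ` (where the completed
`uᵗ` has cancelled that `b`). Conversely, if `b :: y` is almost even, the excess on the prefixes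
of `y` moves by single steps up to its final value 2, so the first prefix of `y` where it reaches
1 is almost even, and so is the rest of `y`: induction on length gives the tree. Uniqueness holds
because no almost even string is a proper prefix of another, so `uᵗ ++ vᵗ` determines `uᵗ`
and `vᵗ`.
-/

theorem List.isPrefix_append_cases {α : Type*} {w x y : List α} (h : w <+: x ++ y) :
    w <+: x ∨ ∃ w', w = x ++ w' ∧ w' <+: y := by
  rcases le_or_gt w.length x.length with hle | hlt
  · exact Or.inl ((List.isPrefix_append_of_length hle).mp h)
  · obtain ⟨w', rfl⟩ := List.prefix_of_prefix_length_le (x.prefix_append y) h hlt.le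
    exact Or.inr ⟨w', rfl, (List.prefix_append_right_inj x).mp h⟩

@[simp] theorem alpha_nil : alpha [] = 0 := rfl
@[simp] theorem beta_nil : beta [] = 0 := rfl

@[simp] theorem alpha_cons_a (x : List Letter) : alpha (a :: x) = alpha x + 1 := by
  simp [alpha]

@[simp] theorem beta_cons_a (x : List Letter) : beta (a :: x) = beta x := by
  simp [beta]

@[simp] theorem alpha_cons_b (x : List Letter) : alpha (b :: x) = alpha x := by
  simp [alpha]

@[simp] theorem beta_cons_b (x : List Letter) : beta (b :: x) = beta x + 1 := by
  simp [beta]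

@[simp] theorem alpha_append (x y : List Letter) : alpha (x ++ y) = alpha x + alpha y :=
  List.count_append

@[simp] theorem beta_append (x y : List Letter) : beta (x ++ y) = beta x + beta y :=
  List.count_append

namespace AE

theorem alpha_le_beta_succ_of_prefix {x u : List Letter} (hx : AE x) (hu : u <+: x) :
    alpha u ≤ beta u + 1 := by
  rcases eq_or_ne u x with rfl | hne
  · exact hx.2.1.le
  · exact (hx.2.2 u hu hne).trans (Nat.le_succ _)

theorem eq_of_prefix {x y : List Letter} (hx : AE x) (hy : AE y) (h : x <+: y) : x = y := by
  by_contra hne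
  have := hy.2.2 x h hne
  have := hx.2.1
  omega

theorem singleton_a : AE [a] := by
  refine ⟨List.cons_ne_nil _ _, rfl, fun u hu hne => ?_⟩
  rcases List.prefix_cons_iff.mp hu with rfl | ⟨t, rfl, ht⟩
  · simp
  · exact absurd (by rw [List.prefix_nil.mp ht]) hne

theorem pair {x y : List Letter} (hx : AE x) (hy : AE y) : AE (b :: (x ++ y)) := by
  refine ⟨List.cons_ne_nil _ _, by simp [hx.2.1, hy.2.1]; omega, fun u hu hne => ?_⟩
  rcases List.prefix_cons_iff.mp hu with rfl | ⟨w, rfl, hw⟩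
  · simp
  rcases List.isPrefix_append_cases hw with hwx | ⟨w', rfl, hw'y⟩
  · simpa using hx.alpha_le_beta_succ_of_prefix hwx
  · have hw' : w' ≠ y := by rintro rfl; exact hne rfl
    have := hy.2.2 w' hw'y hw'
    simp [hx.2.1]
    omega

theorem eq_nil_of_cons_a {y : List Letter} (h : AE (a :: y)) : y = [] := by
  by_contra hy
  have := h.2.2 [a] (List.cons_prefix_cons.mpr ⟨rfl, List.nil_prefix⟩)
    (by simpa using Ne.symm hy)
  simp at this

end AE

theorem prefixes_alpha_le_beta_or_exists_AE_prefix (y : List Letter) :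
    (∀ u, u <+: y → alpha u ≤ beta u) ∨ ∃ y₁ y₂, y = y₁ ++ y₂ ∧ AE y₁ := by
  induction y using List.reverseRecOn with
  | nil => left; intro u hu; simp [List.prefix_nil.mp hu]
  | append_singleton z c ih =>
    rcases ih with hz | ⟨y₁, y₂, rfl, hy₁⟩
    · by_cases hzc : alpha (z ++ [c]) ≤ beta (z ++ [c])
      · left
        intro u hu
        rcases List.prefix_concat_iff.mp hu with rfl | hu
        exacts [hzc, hz u hu]
      · right
        refine ⟨z ++ [c], [], (List.append_nil _).symm, List.concat_ne_nil _ _, ?_, ?_⟩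
        · have := hz z (List.prefix_refl z)
          cases c <;> simp at hzc ⊢ <;> omega
        · intro u hu hne
          rcases List.prefix_concat_iff.mp hu with rfl | hu
          exacts [absurd rfl hne, hz u hu]
    · exact Or.inr ⟨y₁, y₂ ++ [c], by simp, hy₁⟩

theorem exists_AE_prefix {y : List Letter} (hy : beta y < alpha y) :
    ∃ y₁ y₂, y = y₁ ++ y₂ ∧ AE y₁ :=
  (prefixes_alpha_le_beta_or_exists_AE_prefix y).resolve_left
    fun h => absurd (h y (List.prefix_refl y)) (not_le.mpr hy)

theorem AE.split_of_cons_b {y : List Letter} (h : AE (b :: y)) :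
    ∃ y₁ y₂, y = y₁ ++ y₂ ∧ AE y₁ ∧ AE y₂ := by
  have hy : alpha y = beta y + 2 := by have := h.2.1; simp at this; omega
  obtain ⟨y₁, y₂, rfl, hy₁⟩ := exists_AE_prefix (y := y) (by omega)
  have hy₂ : alpha y₂ = beta y₂ + 1 := by simp [hy₁.2.1] at hy; omega
  refine ⟨y₁, y₂, rfl, hy₁, ?_, hy₂, fun u hu hne => ?_⟩
  · rintro rfl; simp at hy₂
  · have := h.2.2 (b :: (y₁ ++ u)) (by simpa using hu) (by simpa using hne)
    simp [hy₁.2.1] at this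
    omega

theorem AE_code (t : Tr) : AE (code t) := by
  induction t with
  | zero => exact AE.singleton_a
  | pair u v ihu ihv => exact ihu.pair ihv

theorem code_injective : Function.Injective code := by
  intro s
  induction s with
  | zero => rintro (_ | _) h <;> simp_all [code]
  | pair u v ihu ihv =>
    rintro (_ | ⟨u', v'⟩) h
    · simp [code] at h
    simp only [code, List.cons.injEq, true_and] at h
    have hu : code u = code u' := by
      rcases List.prefix_or_prefix_of_prefix (h ▸ List.prefix_append _ _) (List.prefix_append _ _)
        with hp | hp
      exacts [(AE_code u).eq_of_prefix (AE_code u') hp,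
        ((AE_code u').eq_of_prefix (AE_code u) hp).symm]
    rw [hu, List.append_cancel_left_eq] at h
    rw [ihu hu, ihv h]

theorem exists_code_of_AE (x : List Letter) (hx : AE x) : ∃ t, code t = x :=
  match x, hx with
  | a :: y, hx => ⟨Tr.zero, by rw [hx.eq_nil_of_cons_a]; rfl⟩
  | b :: y, hx =>
    have ⟨y₁, y₂, hy, hy₁, hy₂⟩ := hx.split_of_cons_b
    have : y₁.length < (b :: y).length := by simp [hy]
    have : y₂.length < (b :: y).length := by simp [hy]
    have ⟨t₁, ht₁⟩ := exists_code_of_AE y₁ hy₁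
    have ⟨t₂, ht₂⟩ := exists_code_of_AE y₂ hy₂
    ⟨Tr.pair t₁ t₂, by rw [code, ht₁, ht₂, hy]⟩
termination_by x.length

theorem stmt17 (x : List Letter) : AE x ↔ ∃! t : Tr, code t = x := by
  constructor
  · intro hx
    obtain ⟨t, rfl⟩ := exists_code_of_AE x hx
    exact ⟨t, rfl, fun s hs => code_injective hs⟩
  · rintro ⟨t, rfl, -⟩
    exact AE_code t
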